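/- arXiv:2107.00770 — 3 statements merged into one kernel-verified Lean document; each statement's English description precedes it below -/
import Mathlib

section
/- Define q_even(n) = (c)_{3n}(d)_{3n} / ((2n)! (a)_{2n}(b)_{2n}) and q_odd(n) = (c)_{3n+2}(d)_{3n+1} / ((2n+1)! (a)_{2n+1}(b)_{2n+1}), the values at unity of the type I linear forms for the hypergeometric multiple orthogonal polynomials. Then for a, b, c, d > 0, the ratios q_odd(n)/q_even(n) and q_even(n+1)/q_odd(n) both converge to 27/8 as n → ∞. -/
open scoped BigOperators

/-- Pochhammer symbol `(a)_n = a(a+1)⋯(a+n-1)`. -/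
noncomputable def poch (a : ℝ) (n : ℕ) : ℝ := ∏ i ∈ Finset.range n, (a + i)

/-- Value `q^{(2n)}(1)` of the type I linear form at unity. -/
noncomputable def qeven (a b c d : ℝ) (n : ℕ) : ℝ :=
  poch c (3*n) * poch d (3*n) /
    ((Nat.factorial (2*n)) * poch a (2*n) * poch b (2*n))

/-- Value `q^{(2n+1)}(1)` of the type I linear form at unity. -/
noncomputable def qodd (a b c d : ℝ) (n : ℕ) : ℝ :=
  poch c (3*n+2) * poch d (3*n+1) /
    ((Nat.factorial (2*n+1)) * poch a (2*n+1) * poch b (2*n+1))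

lemma poch_pos {a : ℝ} (ha : 0 < a) (n : ℕ) : 0 < poch a n :=
  Finset.prod_pos fun i _ => by positivity

lemma poch_succ (a : ℝ) (n : ℕ) : poch a (n+1) = poch a n * (a + n) :=
  Finset.prod_range_succ _ _

lemma aux_tendsto (p q r s : ℝ) (hs : s ≠ 0) :
    Filter.Tendsto (fun n : ℕ => (p + q*n)/(r + s*n)) Filter.atTop (nhds (q/s)) := by
  have h1 : Filter.Tendsto (fun n : ℕ => ((n:ℝ))⁻¹) Filter.atTop (nhds 0) :=
    tendsto_inv_atTop_zero.comp tendsto_natCast_atTop_atTop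
  have h2 : Filter.Tendsto (fun n : ℕ => (p*((n:ℝ))⁻¹ + q)/(r*((n:ℝ))⁻¹ + s))
      Filter.atTop (nhds ((p*0 + q)/(r*0 + s))) := by
    apply Filter.Tendsto.div
    · exact ((h1.const_mul p).add tendsto_const_nhds)
    · exact ((h1.const_mul r).add tendsto_const_nhds)
    · simpa using hs
  have h3 : (p*0 + q)/(r*0 + s) = q/s := by ring_nf
  rw [h3] at h2
  refine h2.congr' ?_
  filter_upwards [Filter.eventually_gt_atTop 0] with n hn
  have hne : ((n:ℝ)) ≠ 0 := Nat.cast_ne_zero.mpr hn.ne'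
  have hn' : ((n:ℝ))⁻¹ ≠ 0 := inv_ne_zero hne
  rw [show p*((n:ℝ))⁻¹ + q = (p + q*n) * ((n:ℝ))⁻¹ from by field_simp,
    show r*((n:ℝ))⁻¹ + s = (r + s*n) * ((n:ℝ))⁻¹ from by field_simp,
    mul_div_mul_right _ _ hn']

theorem stmt5 (a b c d : ℝ) (ha : 0 < a) (hb : 0 < b) (hc : 0 < c) (hd : 0 < d) :
    Filter.Tendsto (fun n : ℕ => qodd a b c d n / qeven a b c d n)
      Filter.atTop (nhds (27/8)) ∧
    Filter.Tendsto (fun n : ℕ => qeven a b c d (n+1) / qodd a b c d n)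
      Filter.atTop (nhds (27/8)) := by
  have hfac : ∀ n : ℕ, (0:ℝ) < (Nat.factorial n : ℝ) := fun n => by
    exact_mod_cast Nat.factorial_pos n
  constructor
  · have heq : ∀ n : ℕ, qodd a b c d n / qeven a b c d n =
        ((c + 3*n)/(1 + 2*n)) * ((c+1 + 3*n)/(a + 2*n)) * ((d + 3*n)/(b + 2*n)) := by
      intro n
      have e1 : poch c (3*n+2) = poch c (3*n) * (c + 3*n) * (c + 1 + 3*n) := by
        rw [show 3*n+2 = (3*n+1)+1 from rfl, poch_succ, poch_succ]
        push_cast; ring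
      have e2 : poch d (3*n+1) = poch d (3*n) * (d + 3*n) := by
        rw [poch_succ]; push_cast; ring
      have e3 : poch a (2*n+1) = poch a (2*n) * (a + 2*n) := by
        rw [poch_succ]; push_cast; ring
      have e4 : poch b (2*n+1) = poch b (2*n) * (b + 2*n) := by
        rw [poch_succ]; push_cast; ring
      have e5 : (Nat.factorial (2*n+1) : ℝ) = (Nat.factorial (2*n) : ℝ) * (1 + 2*n) := by
        rw [Nat.factorial_succ]; push_cast; ring
      have hca := (poch_pos hc (3*n)).ne'
      have hda := (poch_pos hd (3*n)).ne'
      have haa := (poch_pos ha (2*n)).ne'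
      have hba := (poch_pos hb (2*n)).ne'
      have hf := (hfac (2*n)).ne'
      have h1 : (1:ℝ) + 2*n ≠ 0 := by positivity
      have h2 : a + 2*(n:ℝ) ≠ 0 := by positivity
      have h3 : b + 2*(n:ℝ) ≠ 0 := by positivity
      unfold qodd qeven
      rw [e1, e2, e3, e4, e5]
      field_simp
    have h := ((aux_tendsto c 3 1 2 (by norm_num)).mul
        (aux_tendsto (c+1) 3 a 2 (by norm_num))).mul
        (aux_tendsto d 3 b 2 (by norm_num))
    have hv : (3:ℝ)/2 * (3/2) * (3/2) = 27/8 := by norm_num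
    rw [hv] at h
    exact h.congr fun n => (heq n).symm
  · have heq : ∀ n : ℕ, qeven a b c d (n+1) / qodd a b c d n =
        ((c+2 + 3*n)/(2 + 2*n)) * ((d+1 + 3*n)/(a+1 + 2*n)) * ((d+2 + 3*n)/(b+1 + 2*n)) := by
      intro n
      have e1 : poch c (3*(n+1)) = poch c (3*n+2) * (c + 2 + 3*n) := by
        rw [show 3*(n+1) = (3*n+2)+1 by ring, poch_succ]; push_cast; ring
      have e2 : poch d (3*(n+1)) = poch d (3*n+1) * (d + 1 + 3*n) * (d + 2 + 3*n) := by
        rw [show 3*(n+1) = ((3*n+1)+1)+1 by ring, poch_succ, poch_succ]; push_cast; ring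
      have e3 : poch a (2*(n+1)) = poch a (2*n+1) * (a + 1 + 2*n) := by
        rw [show 2*(n+1) = (2*n+1)+1 by ring, poch_succ]; push_cast; ring
      have e4 : poch b (2*(n+1)) = poch b (2*n+1) * (b + 1 + 2*n) := by
        rw [show 2*(n+1) = (2*n+1)+1 by ring, poch_succ]; push_cast; ring
      have e5 : (Nat.factorial (2*(n+1)) : ℝ) = (Nat.factorial (2*n+1) : ℝ) * (2 + 2*n) := by
        rw [show 2*(n+1) = (2*n+1)+1 by ring, Nat.factorial_succ]; push_cast; ring
      have hca := (poch_pos hc (3*n+2)).ne'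
      have hda := (poch_pos hd (3*n+1)).ne'
      have haa := (poch_pos ha (2*n+1)).ne'
      have hba := (poch_pos hb (2*n+1)).ne'
      have hf := (hfac (2*n+1)).ne'
      have h1 : (2:ℝ) + 2*n ≠ 0 := by positivity
      have h2 : a + 1 + 2*(n:ℝ) ≠ 0 := by positivity
      have h3 : b + 1 + 2*(n:ℝ) ≠ 0 := by positivity
      unfold qodd qeven
      rw [e1, e2, e3, e4, e5]
      field_simp
    have h := ((aux_tendsto (c+2) 3 2 2 (by norm_num)).mul
        (aux_tendsto (d+1) 3 (a+1) 2 (by norm_num))).mul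
        (aux_tendsto (d+2) 3 (b+1) 2 (by norm_num))
    have hv : (3:ℝ)/2 * (3/2) * (3/2) = 27/8 := by norm_num
    rw [hv] at h
    exact h.congr fun n => (heq n).symm
end

section
/- For every nonnegative integer n, ₃F₂(-n, (n+3)/2, (n+2)/2; 4/3, 5/3; 1) = 2(1 - (-8)^{n+1})/(9(n+1)(3n+2)·4ⁿ). -/
open scoped BigOperators

lemma poch_pred (a : ℝ) (n : ℕ) : poch (a-1) n * (a - 1 + n) = (a-1) * poch a n := by
  have h : poch (a-1) (n+1) = (a-1) * poch a n := by
    unfold poch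
    rw [Finset.prod_range_succ']
    have : ∀ i ∈ Finset.range n, (a - 1 + ((i:ℕ)+1 : ℕ)) = a + i := by
      intro i _; push_cast; ring
    rw [Finset.prod_congr rfl this]
    push_cast; ring
  rw [← h, poch_succ]
lemma poch_one (k : ℕ) : poch 1 k = (Nat.factorial k : ℝ) := by
  induction k with
  | zero => simp [poch]
  | succ m ih => rw [poch_succ, ih, Nat.factorial_succ]; push_cast; ring
lemma pochL1 (x : ℝ) (k : ℕ) :
    poch ((x+1)/2) k * poch (x/2) k * 4^k = poch x (2*k) := by
  induction k with
  | zero => simp [poch]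
  | succ m ih =>
    have h2 : 2*(m+1) = 2*m+1+1 := by ring
    rw [h2, poch_succ, poch_succ, poch_succ, poch_succ]
    push_cast
    linear_combination (((x+1)/2+(m:ℝ))*((x:ℝ)/2+m)*4) * ih
lemma pochL2 (k : ℕ) :
    poch 1 k * poch (4/3) k * poch (5/3) k * 27^k = poch 3 (3*k) := by
  induction k with
  | zero => simp [poch]
  | succ m ih =>
    have h3 : 3*(m+1) = 3*m+1+1+1 := by ring
    rw [h3, poch_succ, poch_succ, poch_succ, poch_succ, poch_succ, poch_succ]
    push_cast
    linear_combination ((1+(m:ℝ))*(4/3+(m:ℝ))*(5/3+(m:ℝ))*27) * ih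

noncomputable def Fterm (n k : ℕ) : ℝ :=
  27^k * poch (-(n:ℝ)) k * poch ((n:ℝ)+2) (2*k) / (4^k * poch 3 (3*k))

noncomputable def Gterm (n k : ℕ) : ℝ :=
  -12 * k * (3*k+1) * (3*k+2) * 27^k * poch (-(n:ℝ)-2) k * poch ((n:ℝ)+2) (2*k)
    / (((n:ℝ)+2) * 4^k * poch 3 (3*k))

lemma term_eq (n k : ℕ) :
    poch (-(n:ℝ)) k * poch (((n:ℝ)+3)/2) k * poch (((n:ℝ)+2)/2) k /
        (poch (4/3) k * poch (5/3) k * (Nat.factorial k)) = Fterm n k := by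
  have l1 := pochL1 ((n:ℝ)+2) k
  rw [show ((n:ℝ)+2+1) = (n:ℝ)+3 by ring] at l1
  have l2 := pochL2 k
  rw [poch_one] at l2
  have h1 : (0:ℝ) < poch (4/3) k * poch (5/3) k * (Nat.factorial k) := by
    have := poch_pos (show (0:ℝ) < 4/3 by norm_num) k
    have := poch_pos (show (0:ℝ) < 5/3 by norm_num) k
    have := Nat.factorial_pos k
    positivity
  have h2 : (0:ℝ) < 4^k * poch 3 (3*k) := by
    have := poch_pos (show (0:ℝ) < 3 by norm_num) k -- unused shape
    have := poch_pos (show (0:ℝ) < 3 by norm_num) (3*k)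
    positivity
  unfold Fterm
  rw [div_eq_div_iff (ne_of_gt h1) (ne_of_gt h2)]
  linear_combination (poch (-(n:ℝ)) k * poch 3 (3*k)) * l1 -
    (poch (-(n:ℝ)) k * poch ((n:ℝ)+2) (2*k)) * l2

lemma cert (n k : ℕ) :
    (4*((n:ℝ)+3)*(3*(n:ℝ)+8)) * Fterm (n+2) k + (7*((n:ℝ)+2)*(3*(n:ℝ)+5)) * Fterm (n+1) k
      - (2*((n:ℝ)+1)*(3*(n:ℝ)+2)) * Fterm n k = Gterm n (k+1) - Gterm n k := by
  have hn0 : (0:ℝ) ≤ (n:ℝ) := Nat.cast_nonneg n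
  have hn1 : (-(n:ℝ)-1) ≠ 0 := by intro h; linarith
  have hn2 : (-(n:ℝ)-2) ≠ 0 := by intro h; linarith
  have hp1 : ((n:ℝ)+1) ≠ 0 := by positivity
  have hp2 : ((n:ℝ)+2) ≠ 0 := by positivity
  have hp3 : ((n:ℝ)+3) ≠ 0 := by positivity
  have h4 : ((4:ℝ))^k ≠ 0 := by positivity
  have hC : poch 3 (3*k) ≠ 0 := ne_of_gt (poch_pos (by norm_num) _)
  -- relations
  have hA1 : poch (-(n:ℝ)-1) k = poch (-(n:ℝ)-2) k * ((k:ℝ)-(n:ℝ)-2) / (-(n:ℝ)-2) := by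
    have h := poch_pred (-(n:ℝ)-1) k
    rw [show -(n:ℝ)-1-1 = -(n:ℝ)-2 by ring] at h
    rw [eq_div_iff hn2]; linear_combination -h
  have hA0 : poch (-(n:ℝ)) k = poch (-(n:ℝ)-1) k * ((k:ℝ)-(n:ℝ)-1) / (-(n:ℝ)-1) := by
    have h := poch_pred (-(n:ℝ)) k
    rw [show -(n:ℝ)-1+(k:ℝ) = (k:ℝ)-(n:ℝ)-1 by ring] at h
    rw [eq_div_iff hn1]; linear_combination -h
  have hB4 : poch ((n:ℝ)+4) (2*k) = poch ((n:ℝ)+3) (2*k) * ((n:ℝ)+3+2*k) / ((n:ℝ)+3) := by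
    have h := poch_pred ((n:ℝ)+4) (2*k)
    rw [show (n:ℝ)+4-1 = (n:ℝ)+3 by ring] at h
    rw [eq_div_iff hp3]; push_cast at h ⊢; linear_combination -h
  have hB3 : poch ((n:ℝ)+3) (2*k) = poch ((n:ℝ)+2) (2*k) * ((n:ℝ)+2+2*k) / ((n:ℝ)+2) := by
    have h := poch_pred ((n:ℝ)+3) (2*k)
    rw [show (n:ℝ)+3-1 = (n:ℝ)+2 by ring] at h
    rw [eq_div_iff hp2]; push_cast at h ⊢; linear_combination -h
  have hA' : poch (-(n:ℝ)-2) (k+1) = poch (-(n:ℝ)-2) k * ((k:ℝ)-(n:ℝ)-2) := by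
    rw [poch_succ]; ring
  have hB' : poch ((n:ℝ)+2) (2*(k+1))
      = poch ((n:ℝ)+2) (2*k) * ((n:ℝ)+2+2*k) * ((n:ℝ)+3+2*k) := by
    rw [show 2*(k+1) = 2*k+1+1 by ring, poch_succ, poch_succ]; push_cast; ring
  have hC' : poch 3 (3*(k+1))
      = poch 3 (3*k) * (3+3*(k:ℝ)) * (4+3*(k:ℝ)) * (5+3*(k:ℝ)) := by
    rw [show 3*(k+1) = 3*k+1+1+1 by ring, poch_succ, poch_succ, poch_succ]; push_cast; ring
  unfold Fterm Gterm
  push_cast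
  rw [show -((n:ℝ)+2) = -(n:ℝ)-2 by ring, show -((n:ℝ)+1) = -(n:ℝ)-1 by ring,
      show (n:ℝ)+2+2 = (n:ℝ)+4 by ring, show (n:ℝ)+1+2 = (n:ℝ)+3 by ring]
  rw [hA0, hA1, hB4, hB3, hA', hB', hC']
  field_simp
  ring

noncomputable def Ssum (n : ℕ) : ℝ := ∑ k ∈ Finset.range (n+1), Fterm n k

lemma Fterm_zero {n k : ℕ} (h : n < k) : Fterm n k = 0 := by
  unfold Fterm
  have : poch (-(n:ℝ)) k = 0 := by
    unfold poch
    exact Finset.prod_eq_zero (Finset.mem_range.mpr h) (by simp)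
  rw [this]; ring

lemma Ssum_ext (n m : ℕ) (h : n < m) : Ssum n = ∑ k ∈ Finset.range m, Fterm n k := by
  unfold Ssum
  refine Finset.sum_subset (Finset.range_subset_range.mpr (by omega)) ?_
  intro k hk hnk
  exact Fterm_zero (by simp at hnk; omega)

lemma Gterm_zero_left (n : ℕ) : Gterm n 0 = 0 := by simp [Gterm]

lemma Gterm_zero_right (n : ℕ) : Gterm n (n+3) = 0 := by
  unfold Gterm
  have : poch (-(n:ℝ)-2) (n+3) = 0 := by
    unfold poch
    refine Finset.prod_eq_zero (Finset.mem_range.mpr (by omega : n+2 < n+3)) ?_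
    push_cast; ring
  rw [this]; ring

lemma Ssum_rec (n : ℕ) :
    (4*((n:ℝ)+3)*(3*(n:ℝ)+8)) * Ssum (n+2) + (7*((n:ℝ)+2)*(3*(n:ℝ)+5)) * Ssum (n+1)
      - (2*((n:ℝ)+1)*(3*(n:ℝ)+2)) * Ssum n = 0 := by
  rw [Ssum_ext (n+2) (n+3) (by omega), Ssum_ext (n+1) (n+3) (by omega),
      Ssum_ext n (n+3) (by omega), Finset.mul_sum, Finset.mul_sum, Finset.mul_sum,
      ← Finset.sum_add_distrib, ← Finset.sum_sub_distrib]
  rw [Finset.sum_congr rfl (fun k _ => cert n k)]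
  rw [Finset.sum_range_sub (fun k => Gterm n k) (n+3)]
  rw [Gterm_zero_left, Gterm_zero_right]
  ring

noncomputable def Rhs (n : ℕ) : ℝ :=
  2 * (1 - (-8 : ℝ) ^ (n+1)) / (9 * ((n:ℝ)+1) * (3 * (n:ℝ) + 2) * 4 ^ n)

lemma Rhs_rec (n : ℕ) :
    (4*((n:ℝ)+3)*(3*(n:ℝ)+8)) * Rhs (n+2) + (7*((n:ℝ)+2)*(3*(n:ℝ)+5)) * Rhs (n+1)
      - (2*((n:ℝ)+1)*(3*(n:ℝ)+2)) * Rhs n = 0 := by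
  unfold Rhs
  have hn0 : (0:ℝ) ≤ (n:ℝ) := Nat.cast_nonneg n
  have h1 : ((n:ℝ)+1) ≠ 0 := by positivity
  have h2 : ((n:ℝ)+2) ≠ 0 := by positivity
  have h3 : ((n:ℝ)+3) ≠ 0 := by positivity
  have h4 : (3*(n:ℝ)+2) ≠ 0 := by positivity
  have h5 : (3*(n:ℝ)+5) ≠ 0 := by positivity
  have h6 : (3*(n:ℝ)+8) ≠ 0 := by positivity
  have h7 : ((4:ℝ))^n ≠ 0 := by positivity
  push_cast
  field_simp
  ring

lemma base0 : Ssum 0 = Rhs 0 := by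
  simp [Ssum, Rhs, Fterm, poch]
  norm_num

lemma base1 : Ssum 1 = Rhs 1 := by
  simp [Ssum, Rhs, Fterm, poch, Finset.sum_range_succ, Finset.prod_range_succ]
  norm_num

lemma key (n : ℕ) : Ssum n = Rhs n := by
  have H : ∀ m : ℕ, Ssum m = Rhs m ∧ Ssum (m+1) = Rhs (m+1) := by
    intro m
    induction m with
    | zero => exact ⟨base0, base1⟩
    | succ p ih =>
      refine ⟨ih.2, ?_⟩
      have hrec := Ssum_rec p
      have hrr := Rhs_rec p
      have hmul : (4*((p:ℝ)+3)*(3*(p:ℝ)+8)) * Ssum (p+2)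
          = (4*((p:ℝ)+3)*(3*(p:ℝ)+8)) * Rhs (p+2) := by
        linear_combination hrec - hrr - (7*((p:ℝ)+2)*(3*(p:ℝ)+5)) * ih.2
          + (2*((p:ℝ)+1)*(3*(p:ℝ)+2)) * ih.1
      have hnz : (4*((p:ℝ)+3)*(3*(p:ℝ)+8)) ≠ 0 := by positivity
      exact mul_left_cancel₀ hnz hmul
  exact (H n).1

theorem stmt10 (n : ℕ) :
    ∑ k ∈ Finset.range (n+1),
      poch (-(n:ℝ)) k * poch (((n:ℝ)+3)/2) k * poch (((n:ℝ)+2)/2) k /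
        (poch (4/3) k * poch (5/3) k * (Nat.factorial k))
      = 2 * (1 - (-8 : ℝ) ^ (n+1)) / (9 * ((n:ℝ)+1) * (3 * (n:ℝ) + 2) * 4 ^ n) := by
  rw [Finset.sum_congr rfl (fun k _ => term_eq n k)]
  exact key n
end

section
/- Minton's summation: for complex β, f₁,…,f_p, positive integers m₁,…,m_p, and a nonnegative integer n with n ≥ m₁+⋯+m_p, the terminating hypergeometric sum _{p+2}F_{p+1}(-n, β, f₁+m₁,…,f_p+m_p; β+1, f₁,…,f_p; 1) equals n!(f₁-β)_{m₁}⋯(f_p-β)_{m_p} / ((β+1)_n (f₁)_{m₁}⋯(f_p)_{m_p}), provided none of β+1, f₁,…,f_p is a nonpositive integer. -/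
open scoped BigOperators

/-- Pochhammer symbol `(a)_n = a(a+1)⋯(a+n-1)` over `ℂ`. -/
noncomputable def pochC (a : ℂ) (n : ℕ) : ℂ := ∏ i ∈ Finset.range n, (a + i)

lemma pochC_zero (a : ℂ) : pochC a 0 = 1 := by simp [pochC]

lemma pochC_succ (a : ℂ) (k : ℕ) : pochC a (k+1) = pochC a k * (a + k) := by
  simp [pochC, Finset.prod_range_succ]

lemma pochC_add (a : ℂ) (m k : ℕ) : pochC a (m + k) = pochC a m * pochC (a + m) k := by
  simp only [pochC, Finset.prod_range_add]
  congr 1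
  refine Finset.prod_congr rfl fun j _ => by push_cast; ring

lemma pochC_ne_zero {a : ℂ} (h : ∀ j : ℕ, a ≠ -(j:ℂ)) (k : ℕ) : pochC a k ≠ 0 := by
  rw [pochC, Finset.prod_ne_zero_iff]
  intro j _ hj
  exact h j (by linear_combination hj)

lemma pochC_one (n : ℕ) : pochC 1 n = Nat.factorial n := by
  induction n with
  | zero => simp [pochC]
  | succ k ih => rw [pochC_succ, ih, Nat.factorial_succ]; push_cast; ring

lemma pochC_beta (β : ℂ) (k : ℕ) : β * pochC (β+1) k = pochC β k * (β + k) := by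
  have h1 := pochC_add β 1 k
  have h2 : pochC β (k + 1) = pochC β k * (β + k) := pochC_succ β k
  rw [Nat.add_comm 1 k] at h1
  rw [h2] at h1
  simp only [pochC, Finset.prod_range_one, Nat.cast_one, Nat.cast_zero, add_zero] at h1 ⊢
  rw [← h1]

lemma pochC_neg_nat {n k : ℕ} (h : k ≤ n) :
    pochC (-(n:ℂ)) k = (-1)^k * (Nat.factorial k * Nat.choose n k : ℕ) := by
  induction k with
  | zero => simp [pochC]
  | succ j ih =>
    have hj : j ≤ n := Nat.le_of_succ_le h
    rw [pochC_succ, ih hj]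
    have key : Nat.choose n (j+1) * (j+1) = Nat.choose n j * (n - j) := Nat.choose_succ_right_eq n j
    have hnj : ((n - j : ℕ) : ℂ) = (n : ℂ) - j := by
      push_cast [Nat.cast_sub hj]; ring
    have : ((Nat.factorial (j+1) * Nat.choose n (j+1) : ℕ) : ℂ)
        = (Nat.factorial j * Nat.choose n j : ℕ) * ((n:ℂ) - j) := by
      rw [Nat.factorial_succ, ← hnj]
      push_cast
      have := congrArg (fun x : ℕ => (x : ℂ)) key
      push_cast at this
      linear_combination (Nat.factorial j : ℂ) * this
    rw [this]
    ring

lemma pascal_sum (n : ℕ) (g : ℕ → ℂ) :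
    ∑ k ∈ Finset.range (n+2), (-1)^k * (Nat.choose (n+1) k : ℂ) * g k
    = ∑ k ∈ Finset.range (n+1), (-1)^k * (Nat.choose n k : ℂ) * (g k - g (k+1)) := by
  have h1 : ∑ k ∈ Finset.range (n+2), (-1)^k * (Nat.choose (n+1) k : ℂ) * g k
      = (∑ k ∈ Finset.range (n+1), (-1)^(k+1) * (Nat.choose (n+1) (k+1) : ℂ) * g (k+1)) + g 0 := by
    rw [Finset.sum_range_succ' (fun k => (-1)^k * (Nat.choose (n+1) k : ℂ) * g k) (n+1)]
    simp
  have h2 : ∑ k ∈ Finset.range (n+2), (-1)^k * (Nat.choose n k : ℂ) * g k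
      = (∑ k ∈ Finset.range (n+1), (-1)^(k+1) * (Nat.choose n (k+1) : ℂ) * g (k+1)) + g 0 := by
    rw [Finset.sum_range_succ' (fun k => (-1)^k * (Nat.choose n k : ℂ) * g k) (n+1)]
    simp
  have h3 : ∑ k ∈ Finset.range (n+2), (-1)^k * (Nat.choose n k : ℂ) * g k
      = ∑ k ∈ Finset.range (n+1), (-1)^k * (Nat.choose n k : ℂ) * g k := by
    rw [Finset.sum_range_succ]
    simp [Nat.choose_eq_zero_of_lt (Nat.lt_succ_self n)]
  have hpas : ∀ k, ((Nat.choose (n+1) (k+1) : ℕ) : ℂ) = (Nat.choose n k : ℂ) + (Nat.choose n (k+1) : ℂ) := by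
    intro k; rw [Nat.choose_succ_succ]; push_cast; ring
  rw [h1]
  have h4 : (∑ k ∈ Finset.range (n+1), (-1)^(k+1) * (Nat.choose (n+1) (k+1) : ℂ) * g (k+1))
      = (∑ k ∈ Finset.range (n+1), (-1)^(k+1) * (Nat.choose n k : ℂ) * g (k+1))
        + (∑ k ∈ Finset.range (n+1), (-1)^(k+1) * (Nat.choose n (k+1) : ℂ) * g (k+1)) := by
    rw [← Finset.sum_add_distrib]
    refine Finset.sum_congr rfl fun k _ => by rw [hpas]; ring
  rw [h4]
  have h5 : (∑ k ∈ Finset.range (n+1), (-1)^(k+1) * (Nat.choose n (k+1) : ℂ) * g (k+1))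
      = (∑ k ∈ Finset.range (n+1), (-1)^k * (Nat.choose n k : ℂ) * g k) - g 0 := by
    have h := h2.symm.trans h3
    linear_combination h
  have h6 : ∑ k ∈ Finset.range (n+1), (-1)^k * (Nat.choose n k : ℂ) * (g k - g (k+1))
      = (∑ k ∈ Finset.range (n+1), (-1)^k * (Nat.choose n k : ℂ) * g k)
        + (∑ k ∈ Finset.range (n+1), (-1)^(k+1) * (Nat.choose n k : ℂ) * g (k+1)) := by
    rw [← Finset.sum_add_distrib]
    exact Finset.sum_congr rfl fun k _ => by ring
  rw [h5, h6]
  ring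

open Polynomial in
lemma altsum_poly : ∀ (n : ℕ) (T : Polynomial ℂ), T.degree < n →
    ∑ k ∈ Finset.range (n+1), (-1)^k * (Nat.choose n k : ℂ) * T.eval (k:ℂ) = 0 := by
  intro n
  induction n with
  | zero =>
    intro T hT
    have : T = 0 := by
      rw [Nat.cast_zero, Nat.WithBot.lt_zero_iff, Polynomial.degree_eq_bot] at hT
      exact hT
    simp [this]
  | succ n ih =>
    intro T hT
    by_cases hT0 : T = 0
    · simp [hT0]
    have key := pascal_sum n (fun k => T.eval (k:ℂ))
    rw [key]
    have hstep : ∑ k ∈ Finset.range (n+1), (-1)^k * (Nat.choose n k : ℂ)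
          * (T.eval (k:ℂ) - T.eval ((k+1:ℕ):ℂ))
        = ∑ k ∈ Finset.range (n+1), (-1)^k * (Nat.choose n k : ℂ)
          * (T - T.comp (X + C 1)).eval (k:ℂ) := by
      refine Finset.sum_congr rfl fun k _ => by
        simp only [Polynomial.eval_sub, Polynomial.eval_comp, Polynomial.eval_add,
          Polynomial.eval_X, Polynomial.eval_C]
        push_cast; ring
    rw [hstep]
    apply ih
    -- degree (T - T.comp (X+C 1)) < n
    by_cases hc : T - T.comp (X + C 1) = 0
    · rw [hc, Polynomial.degree_zero]; exact WithBot.bot_lt_coe n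
    have hq1 : (X + C (1:ℂ)).natDegree = 1 := Polynomial.natDegree_X_add_C 1
    have h2 : (T.comp (X + C 1)).leadingCoeff = T.leadingCoeff := by
      rw [Polynomial.leadingCoeff_comp (by rw [hq1]; exact one_ne_zero)]
      rw [Polynomial.leadingCoeff_X_add_C, one_pow, mul_one]
    have hc0 : T.comp (X + C (1:ℂ)) ≠ 0 := by
      intro h
      apply hT0
      rw [← Polynomial.leadingCoeff_eq_zero, ← h2, h, Polynomial.leadingCoeff_zero]
    have h1 : (T.comp (X + C 1)).degree = T.degree := by
      rw [Polynomial.degree_eq_natDegree hc0, Polynomial.degree_eq_natDegree hT0,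
        Polynomial.natDegree_comp, hq1, mul_one]
    have hdeg : (T - T.comp (X + C 1)).degree < T.degree :=
      Polynomial.degree_sub_lt h1.symm hT0 h2.symm
    have hnd : T.natDegree < n + 1 := by
      rwa [Polynomial.natDegree_lt_iff_degree_lt hT0]
    have hTn : T.degree ≤ (n : WithBot ℕ) := by
      rw [Polynomial.degree_eq_natDegree hT0]
      exact_mod_cast Nat.lt_succ_iff.mp hnd
    exact lt_of_lt_of_le hdeg hTn

lemma pochC_succ' (a : ℂ) (k : ℕ) : pochC a (k+1) = a * pochC (a+1) k := by
  have h1 := pochC_add a 1 k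
  rw [Nat.add_comm 1 k] at h1
  simpa [pochC, Finset.prod_range_one] using h1

lemma invsum : ∀ (n : ℕ) (β : ℂ), (∀ k : ℕ, β + k ≠ 0) →
    ∑ k ∈ Finset.range (n+1), (-1)^k * (Nat.choose n k : ℂ) * (β + k)⁻¹
      = Nat.factorial n / pochC β (n+1) := by
  intro n
  induction n with
  | zero => intro β h; simp [pochC, div_eq_mul_inv]
  | succ n ih =>
    intro β h
    have h' : ∀ k : ℕ, (β + 1) + k ≠ 0 := by
      intro k
      have := h (k+1)
      push_cast at this ⊢
      intro hk; exact this (by linear_combination hk)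
    rw [pascal_sum n (fun k => (β + k)⁻¹)]
    have hsplit : ∑ k ∈ Finset.range (n+1), (-1)^k * (Nat.choose n k : ℂ)
          * ((β + k)⁻¹ - (β + (k+1:ℕ))⁻¹)
        = (∑ k ∈ Finset.range (n+1), (-1)^k * (Nat.choose n k : ℂ) * (β + k)⁻¹)
          - (∑ k ∈ Finset.range (n+1), (-1)^k * (Nat.choose n k : ℂ) * ((β+1) + k)⁻¹) := by
      rw [← Finset.sum_sub_distrib]
      refine Finset.sum_congr rfl fun k _ => by push_cast; ring_nf
    rw [hsplit, ih β h, ih (β+1) h']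
    have hA : pochC (β+1) n ≠ 0 := by
      apply pochC_ne_zero
      intro j hj
      exact h' j (by linear_combination hj)
    have hβ0 : β ≠ 0 := by have := h 0; simpa using this
    have hβn : β + 1 + n ≠ 0 := h' n
    rw [pochC_succ' β (n+1), pochC_succ (β+1) n, pochC_succ' β n]
    field_simp
    push_cast [Nat.factorial_succ]
    ring

open Polynomial

theorem stmt14 (p : ℕ) (β : ℂ) (f : Fin p → ℂ) (m : Fin p → ℕ)
    (hm : ∀ i, 1 ≤ m i) (n : ℕ) (hn : ∑ i, m i ≤ n)
    (hβ : ∀ k : ℕ, β + 1 ≠ -(k : ℂ)) (hf : ∀ i, ∀ k : ℕ, f i ≠ -(k : ℂ)) :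
    ∑ k ∈ Finset.range (n+1),
      pochC (-(n:ℂ)) k * pochC β k * (∏ i, pochC (f i + (m i : ℂ)) k) /
        (pochC (β + 1) k * (∏ i, pochC (f i) k) * (Nat.factorial k))
      = (Nat.factorial n) * (∏ i, pochC (f i - β) (m i)) /
          (pochC (β + 1) n * ∏ i, pochC (f i) (m i)) := by
  have hfk : ∀ (i : Fin p) (k : ℕ), pochC (f i) k ≠ 0 := fun i k => pochC_ne_zero (hf i) k
  have hFne : (∏ i, pochC (f i) (m i)) ≠ 0 := Finset.prod_ne_zero_iff.mpr fun i _ => hfk i (m i)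
  have hpk : ∀ k : ℕ, (∏ i, pochC (f i) k) ≠ 0 :=
    fun k => Finset.prod_ne_zero_iff.mpr fun i _ => hfk i k
  by_cases hβ0 : β = 0
  · subst hβ0
    have hL : ∑ k ∈ Finset.range (n+1),
        pochC (-(n:ℂ)) k * pochC 0 k * (∏ i, pochC (f i + (m i : ℂ)) k) /
          (pochC (0 + 1) k * (∏ i, pochC (f i) k) * (Nat.factorial k)) = 1 := by
      rw [Finset.sum_eq_single_of_mem 0 (Finset.mem_range.mpr (Nat.succ_pos n))]
      · simp [pochC_zero]
      · intro k _ hk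
        have : pochC (0:ℂ) k = 0 := by
          apply Finset.prod_eq_zero (Finset.mem_range.mpr (Nat.pos_of_ne_zero hk))
          simp
        rw [this]
        simp
    rw [hL]
    have h1 : ∀ i, pochC (f i - 0) (m i) = pochC (f i) (m i) := fun i => by rw [sub_zero]
    simp only [h1, zero_add, pochC_one]
    exact (div_self (mul_ne_zero (Nat.cast_ne_zero.mpr (Nat.factorial_ne_zero n)) hFne)).symm
  -- main case β ≠ 0
  have hβk : ∀ k : ℕ, β + k ≠ 0 := by
    intro k
    cases k with
    | zero => simpa using hβ0
    | succ j =>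
      intro hcon
      apply hβ j
      push_cast at hcon ⊢
      linear_combination hcon
  have hb1 : ∀ k : ℕ, pochC (β+1) k ≠ 0 := pochC_ne_zero hβ
  set P : Polynomial ℂ := ∏ i, ∏ j ∈ Finset.range (m i), (X + C (f i + j)) with hP
  have hPmonic : P.Monic := by
    apply monic_prod_of_monic
    intro i _
    exact monic_prod_of_monic _ _ fun j _ => monic_X_add_C _
  have hPdeg : P.natDegree = ∑ i, m i := by
    rw [hP, natDegree_prod_of_monic _ _ (fun i _ => monic_prod_of_monic _ _
      fun j _ => monic_X_add_C _)]
    refine Finset.sum_congr rfl fun i _ => ?_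
    rw [natDegree_prod_of_monic _ _ (fun j _ => monic_X_add_C _)]
    simp only [natDegree_X_add_C, Finset.sum_const, Finset.card_range, smul_eq_mul, mul_one]
  have hPevalk : ∀ k : ℕ, P.eval (k:ℂ) = ∏ i, pochC (f i + k) (m i) := by
    intro k
    rw [hP]
    simp only [eval_prod, eval_add, eval_X, eval_C]
    refine Finset.prod_congr rfl fun i _ => ?_
    rw [pochC]
    exact Finset.prod_congr rfl fun j _ => by ring
  have hPevalβ : P.eval (-β) = ∏ i, pochC (f i - β) (m i) := by
    rw [hP]
    simp only [eval_prod, eval_add, eval_X, eval_C]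
    refine Finset.prod_congr rfl fun i _ => ?_
    rw [pochC]
    exact Finset.prod_congr rfl fun j _ => by ring
  obtain ⟨T, hT⟩ : (X - C (-β)) ∣ (P - C (P.eval (-β))) := by
    rw [dvd_iff_isRoot]
    simp [IsRoot]
  have hTdeg : T.degree < (n : WithBot ℕ) := by
    by_cases hT0 : T = 0
    · rw [hT0, degree_zero]; exact WithBot.bot_lt_coe n
    have hXC : (X - C (-β)) ≠ (0 : Polynomial ℂ) := X_sub_C_ne_zero (-β)
    have hdm : ((X - C (-β)) * T).degree = 1 + T.degree := by
      rw [degree_mul, degree_X_sub_C]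
    have hle : (P - C (P.eval (-β))).degree ≤ (n : WithBot ℕ) := by
      refine le_trans (degree_sub_le _ _) (max_le ?_ ?_)
      · rw [degree_eq_natDegree hPmonic.ne_zero, hPdeg]
        exact_mod_cast hn
      · exact le_trans (degree_C_le) (by exact_mod_cast Nat.zero_le n)
    rw [hT, hdm] at hle
    rw [degree_eq_natDegree hT0] at hle ⊢
    have h9 : 1 + T.natDegree ≤ n := by exact_mod_cast hle
    exact_mod_cast (by omega : T.natDegree < n)
  have hD : ∀ k : ℕ, P.eval (k:ℂ) = P.eval (-β) + (β + k) * T.eval (k:ℂ) := by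
    intro k
    have := congrArg (fun q => Polynomial.eval (k:ℂ) q) hT
    simp only [eval_sub, eval_mul, eval_X, eval_C] at this
    linear_combination this
  -- termwise identity
  have termEq : ∀ k ∈ Finset.range (n+1),
      pochC (-(n:ℂ)) k * pochC β k * (∏ i, pochC (f i + (m i : ℂ)) k) /
        (pochC (β + 1) k * (∏ i, pochC (f i) k) * (Nat.factorial k))
      = (β * P.eval (-β) / (∏ i, pochC (f i) (m i))) * ((-1)^k * (Nat.choose n k : ℂ) * (β + k)⁻¹)
        + (β / (∏ i, pochC (f i) (m i))) * ((-1)^k * (Nat.choose n k : ℂ) * T.eval (k:ℂ)) := by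
    intro k hk
    have hkn : k ≤ n := Nat.lt_succ_iff.mp (Finset.mem_range.mp hk)
    have hA := pochC_neg_nat (n := n) (k := k) hkn
    have hB : (∏ i, pochC (f i + (m i:ℂ)) k) * (∏ i, pochC (f i) (m i))
        = (∏ i, pochC (f i) k) * P.eval (k:ℂ) := by
      rw [hPevalk, ← Finset.prod_mul_distrib, ← Finset.prod_mul_distrib]
      refine Finset.prod_congr rfl fun i _ => ?_
      rw [mul_comm, ← pochC_add, ← pochC_add, Nat.add_comm]
    have hC := pochC_beta β k
    have hkf : ((Nat.factorial k : ℕ) : ℂ) ≠ 0 := Nat.cast_ne_zero.mpr (Nat.factorial_ne_zero k)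
    have hpm : (∏ i, pochC (f i + (m i:ℂ)) k)
        = (∏ i, pochC (f i) k) * P.eval (k:ℂ) / (∏ i, pochC (f i) (m i)) := by
      rw [eq_div_iff hFne]; exact hB
    have hbk : pochC β k = β * pochC (β+1) k / (β + k) := by
      rw [eq_div_iff (hβk k)]; exact hC.symm
    have e1 : (β + (k:ℂ)) ≠ 0 := hβk k
    have e2 : pochC (β+1) k ≠ 0 := hb1 k
    have e3 : (∏ i, pochC (f i) k) ≠ 0 := hpk k
    rw [hA, hpm, hbk, hD k]
    push_cast
    field_simp
  rw [Finset.sum_congr rfl termEq, Finset.sum_add_distrib, ← Finset.mul_sum, ← Finset.mul_sum,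
    invsum n β hβk, altsum_poly n T hTdeg, mul_zero, add_zero, hPevalβ]
  rw [pochC_succ' β n, div_mul_div_comm,
    div_eq_div_iff (mul_ne_zero hFne (mul_ne_zero hβ0 (hb1 n))) (mul_ne_zero (hb1 n) hFne)]
  ring
end
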